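/- arXiv:2502.16200 — 6 statements merged into one kernel-verified Lean document; each statement's English description precedes it below -/
import Mathlib

section
/- Let P₀ be an N×N real symmetric positive-definite matrix, let C' be an m×N real matrix such that C' P₀ C'ᵀ is invertible, let d ∈ ℝᵐ and w₀ ∈ ℝᴺ. Define w° = w₀ + P₀ C'ᵀ (C' P₀ C'ᵀ)⁻¹ (d − C' w₀). Then C' w° = d, and for every w ∈ ℝᴺ with C' w = d one has (w − w₀)ᵀ P₀⁻¹ (w − w₀) ≥ (w° − w₀)ᵀ P₀⁻¹ (w° − w₀), with equality if and only if w = w°. -/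
/-!
The correction `u = wo - w₀ = P₀ Cᵀ (C P₀ Cᵀ)⁻¹ (d - C w₀)` satisfies `C u = d - C w₀`, and
`P₀⁻¹ u` lies in the range of `Cᵀ`. Hence `u` is `P₀⁻¹`-orthogonal to the kernel of `C`, which
contains `w - wo` for every solution `w` of `C w = d`, and Pythagoras for the positive definite
form `P₀⁻¹` gives the minimality and its equality case.
-/

open Matrix

namespace Matrix

variable {m n : Type*} [Fintype m] [Fintype n]

theorem dotProduct_transpose_mulVec_eq_zero {C : Matrix m n ℝ} {e : n → ℝ} (hCe : C *ᵥ e = 0)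
    (v : m → ℝ) : e ⬝ᵥ (Cᵀ *ᵥ v) = 0 := by
  rw [dotProduct_mulVec, vecMul_transpose, hCe, zero_dotProduct]

theorem IsSymm.dotProduct_mulVec_add_of_orthogonal {Q : Matrix n n ℝ} (hQ : Q.IsSymm)
    {x y : n → ℝ} (hxy : x ⬝ᵥ (Q *ᵥ y) = 0) :
    (x + y) ⬝ᵥ (Q *ᵥ (x + y)) = x ⬝ᵥ (Q *ᵥ x) + y ⬝ᵥ (Q *ᵥ y) := by
  have hyx : y ⬝ᵥ (Q *ᵥ x) = 0 := by
    rw [dotProduct_mulVec, ← mulVec_transpose, hQ.eq, dotProduct_comm, hxy]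
  rw [mulVec_add, add_dotProduct, dotProduct_add, dotProduct_add, hxy, hyx]
  ring

theorem PosDef.dotProduct_mulVec_le_add_of_orthogonal {Q : Matrix n n ℝ} (hQ : Q.PosDef)
    {x y : n → ℝ} (hxy : x ⬝ᵥ (Q *ᵥ y) = 0) :
    y ⬝ᵥ (Q *ᵥ y) ≤ (x + y) ⬝ᵥ (Q *ᵥ (x + y)) ∧
      ((x + y) ⬝ᵥ (Q *ᵥ (x + y)) = y ⬝ᵥ (Q *ᵥ y) ↔ x = 0) := by
  have hsymm : Q.IsSymm := by simpa using hQ.isHermitian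
  rw [hsymm.dotProduct_mulVec_add_of_orthogonal hxy]
  have hx : 0 ≤ x ⬝ᵥ (Q *ᵥ x) := by simpa using hQ.posSemidef.dotProduct_mulVec_nonneg x
  refine ⟨by linarith, fun h => ?_, fun h => by simp [h]⟩
  by_contra hne
  have := hQ.dotProduct_mulVec_pos hne
  simp only [star_trivial] at this
  linarith

end Matrix

/-- minimum weighted-norm solution of a linear constraint. -/
theorem stmt0 {N m : ℕ} (P₀ : Matrix (Fin N) (Fin N) ℝ) (hP : P₀.PosDef)
    (C : Matrix (Fin m) (Fin N) ℝ) (hC : IsUnit (C * P₀ * Cᵀ))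
    (d : Fin m → ℝ) (w₀ : Fin N → ℝ) (wo : Fin N → ℝ)
    (hwo : wo = w₀ + (P₀ * Cᵀ * (C * P₀ * Cᵀ)⁻¹) *ᵥ (d - C *ᵥ w₀)) :
    C *ᵥ wo = d ∧
    ∀ w : Fin N → ℝ, C *ᵥ w = d →
      (wo - w₀) ⬝ᵥ (P₀⁻¹ *ᵥ (wo - w₀)) ≤ (w - w₀) ⬝ᵥ (P₀⁻¹ *ᵥ (w - w₀)) ∧
      ((w - w₀) ⬝ᵥ (P₀⁻¹ *ᵥ (w - w₀)) = (wo - w₀) ⬝ᵥ (P₀⁻¹ *ᵥ (wo - w₀)) ↔ w = wo) := by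
  have hS : C * P₀ * Cᵀ * (C * P₀ * Cᵀ)⁻¹ = 1 :=
    mul_nonsing_inv _ ((isUnit_iff_isUnit_det _).mp hC)
  have hCwo : C *ᵥ wo = d := by
    rw [hwo, mulVec_add, mulVec_mulVec, ← Matrix.mul_assoc, ← Matrix.mul_assoc, hS, one_mulVec,
      add_sub_cancel]
  have hPu : P₀⁻¹ *ᵥ (wo - w₀) = Cᵀ *ᵥ ((C * P₀ * Cᵀ)⁻¹ *ᵥ (d - C *ᵥ w₀)) := by
    rw [hwo, add_sub_cancel_left, mulVec_mulVec, mulVec_mulVec, Matrix.mul_assoc P₀,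
      nonsing_inv_mul_cancel_left (h := isUnit_iff_ne_zero.mpr hP.det_pos.ne')]
  refine ⟨hCwo, fun w hw => ?_⟩
  have horth : (w - wo) ⬝ᵥ (P₀⁻¹ *ᵥ (wo - w₀)) = 0 := by
    rw [hPu]
    exact dotProduct_transpose_mulVec_eq_zero (by rw [mulVec_sub, hw, hCwo, sub_self]) _
  simpa only [sub_add_sub_cancel, sub_eq_zero] using
    hP.inv.dotProduct_mulVec_le_add_of_orthogonal horth
end

section
/- Let C₁ and C₂ be (N−1)×N real matrices partitioned as C₁ = [C̄₁ bᵀ] and C₂ = [C̄₂ gᵀ], where C̄₁, C̄₂ are the (N−1)×(N−1) submatrices formed by the first N−1 columns and bᵀ, gᵀ ∈ ℝ^{N−1} are the last columns (b, g being row vectors). Assume C̄₁ and C̄₂ are invertible and that the scalar 1 + g C̄₂⁻ᵀ C̄₁⁻¹ bᵀ is nonzero, and set γ = (1 + g C̄₂⁻ᵀ C̄₁⁻¹ bᵀ)⁻¹. Then C₁C₂ᵀ = C̄₁C̄₂ᵀ + bᵀg is invertible and I − C₂ᵀ(C₁ C₂ᵀ)⁻¹ C₁ = γ · u vᵀ,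 where u ∈ ℝᴺ is the column vector with first N−1 entries C̄₁⁻¹bᵀ and last entry −1, and vᵀ is the row vector with first N−1 entries g C̄₂⁻ᵀ and last entry −1. In particular this matrix has rank one. -/
/-!
Since `C₁C₂ᵀ` is invertible, `P = I − C₂ᵀ(C₁C₂ᵀ)⁻¹C₁` satisfies `C₁P = 0` and `vᵀP = vᵀ` whenever
`C₂v = 0`. Because `C̄₁` is invertible, the kernel of `C₁` is the line spanned by `u`, so every
column of `P` is a multiple of `u`, and pairing with `v` fixes the multiple: `P = (vᵀu)⁻¹ u vᵀ`.
Here `vᵀu = 1 + g C̄₂⁻ᵀ C̄₁⁻¹ bᵀ = γ⁻¹`, which by the matrix determinant lemma is also what makes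
`C₁C₂ᵀ = C̄₁C̄₂ᵀ + bᵀg` invertible.
-/

open Matrix

namespace Matrix

variable {α R K m k : Type*}

section snocCol

variable {n : ℕ}

def snocCol (A : Matrix m (Fin n) α) (b : m → α) : Matrix m (Fin (n + 1)) α :=
  of fun i => Fin.snoc (A i) (b i)

theorem eq_snocCol {C : Matrix m (Fin (n + 1)) α} {A : Matrix m (Fin n) α} {b : m → α}
    (hA : ∀ i j, C i (Fin.castSucc j) = A i j) (hb : ∀ i, C i (Fin.last n) = b i) :
    C = snocCol A b := by
  ext i j
  induction j using Fin.lastCases <;> simp [snocCol, hA, hb]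

variable [CommRing R]

theorem snoc_dotProduct_snoc (x y : Fin n → R) (a c : R) :
    Fin.snoc x a ⬝ᵥ Fin.snoc y c = x ⬝ᵥ y + a * c := by
  simp [dotProduct, Fin.sum_univ_castSucc]

theorem snocCol_mulVec_snoc (A : Matrix m (Fin n) R) (b : m → R) (y : Fin n → R) (c : R) :
    snocCol A b *ᵥ Fin.snoc y c = A *ᵥ y + c • b := by
  ext i
  simp [snocCol, mulVec, snoc_dotProduct_snoc, mul_comm]

theorem snocCol_mul_transpose_snocCol (A B : Matrix m (Fin n) R) (b g : m → R) :
    snocCol A b * (snocCol B g)ᵀ = A * Bᵀ + vecMulVec b g := by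
  ext i j
  simp [snocCol, mul_apply, Fin.sum_univ_castSucc, vecMulVec_apply]

theorem exists_eq_smul_of_snocCol_mulVec_eq_zero {A : Matrix (Fin n) (Fin n) R} (hA : IsUnit A)
    (b : Fin n → R) {x : Fin (n + 1) → R} (hx : snocCol A b *ᵥ x = 0) :
    ∃ c : R, x = c • Fin.snoc (A⁻¹ *ᵥ b) (-1) := by
  rw [← Fin.snoc_init_self x, snocCol_mulVec_snoc, add_eq_zero_iff_eq_neg] at hx
  have hinit : Fin.init x = -x (Fin.last n) • A⁻¹ *ᵥ b := by
    have := congrArg (A⁻¹ *ᵥ ·) hx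
    rwa [mulVec_mulVec, nonsing_inv_mul _ ((isUnit_iff_isUnit_det A).mp hA), one_mulVec,
      mulVec_neg, mulVec_smul, ← neg_smul] at this
  refine ⟨-x (Fin.last n), funext fun j => ?_⟩
  induction j using Fin.lastCases with
  | last => simp
  | cast j => simpa [Fin.init] using congr_fun hinit j

end snocCol

theorem det_add_vecMulVec [CommRing R] [Fintype m] [DecidableEq m] {A : Matrix m m R}
    (hA : IsUnit A.det) (u v : m → R) :
    (A + vecMulVec u v).det = A.det * (1 + v ⬝ᵥ A⁻¹ *ᵥ u) := by
  rw [vecMulVec_eq Unit, det_add_replicateCol_mul_replicateRow hA, Matrix.mul_assoc,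
    ← replicateCol_mulVec, det_unique (1 + _ : Matrix Unit Unit R)]
  simp

theorem isUnit_mul_transpose_add_vecMulVec [Field K] [Fintype m] [DecidableEq m]
    {A B : Matrix m m K} (hA : IsUnit A.det) (hB : IsUnit B.det) {b g : m → K}
    (h : 1 + g ⬝ᵥ ((B⁻¹)ᵀ *ᵥ (A⁻¹ *ᵥ b)) ≠ 0) : IsUnit (A * Bᵀ + vecMulVec b g) := by
  have hAB : IsUnit (A * Bᵀ).det := by
    rw [det_mul, det_transpose]
    exact hA.mul hB
  rw [isUnit_iff_isUnit_det, det_add_vecMulVec hAB, Matrix.mul_inv_rev, ← transpose_nonsing_inv,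
    ← mulVec_mulVec]
  exact hAB.mul (isUnit_iff_ne_zero.mpr h)

theorem rank_vecMulVec_of_ne_zero [Field K] [Fintype k] {w : m → K} {v : k → K}
    (hw : w ≠ 0) (hv : v ≠ 0) : (vecMulVec w v).rank = 1 := by
  classical
  refine le_antisymm (rank_vecMulVec_le w v) (Nat.one_le_iff_ne_zero.mpr fun h => ?_)
  rw [rank, Submodule.finrank_eq_zero, LinearMap.range_eq_bot] at h
  obtain ⟨i, hi⟩ := Function.ne_iff.mp hw
  obtain ⟨j, hj⟩ := Function.ne_iff.mp hv
  have := congr_fun (LinearMap.congr_fun h (Pi.single j 1)) i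
  simp at this
  exact mul_ne_zero hi hj this

theorem one_sub_transpose_mul_inv_mul_eq_smul_vecMulVec [Field K] [Fintype m] [DecidableEq m]
    [Fintype k] [DecidableEq k] (C₁ C₂ : Matrix m k K) (hM : IsUnit (C₁ * C₂ᵀ)) {u v : k → K}
    (hker : ∀ x, C₁ *ᵥ x = 0 → ∃ c : K, x = c • u) (hv : C₂ *ᵥ v = 0) (hvu : v ⬝ᵥ u ≠ 0) :
    1 - C₂ᵀ * (C₁ * C₂ᵀ)⁻¹ * C₁ = (v ⬝ᵥ u)⁻¹ • vecMulVec u v := by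
  set P := 1 - C₂ᵀ * (C₁ * C₂ᵀ)⁻¹ * C₁
  have hC₁P : C₁ * P = 0 := by
    rw [Matrix.mul_sub, Matrix.mul_one, ← Matrix.mul_assoc, ← Matrix.mul_assoc,
      mul_nonsing_inv _ ((isUnit_iff_isUnit_det _).mp hM), Matrix.one_mul, sub_self]
  have hvP : v ᵥ* P = v := by
    rw [vecMul_sub, vecMul_one, ← vecMul_vecMul, ← vecMul_vecMul, vecMul_transpose, hv,
      zero_vecMul, zero_vecMul, sub_zero]
  refine ext_iff_mulVec.mpr fun x => ?_
  obtain ⟨c, hc⟩ := hker (P *ᵥ x) (by rw [mulVec_mulVec, hC₁P, zero_mulVec])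
  have hcx : c * (v ⬝ᵥ u) = v ⬝ᵥ x := by
    rw [← smul_eq_mul, ← dotProduct_smul, ← hc, dotProduct_mulVec, hvP]
  rw [hc, smul_mulVec, vecMulVec_mulVec, op_smul_eq_smul, smul_smul, ← hcx,
    mul_comm c, inv_mul_cancel_left₀ hvu]

end Matrix

/-- rank-one form of the oblique projection
`I − C₂ᵀ(C₁C₂ᵀ)⁻¹C₁` for partitioned (N−1)×N matrices
C₁ = [C̄₁ bᵀ], C₂ = [C̄₂ gᵀ]. -/
theorem stmt2 {n : ℕ} (C₁ C₂ : Matrix (Fin n) (Fin (n + 1)) ℝ)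
    (Cb₁ Cb₂ : Matrix (Fin n) (Fin n) ℝ) (b g : Fin n → ℝ)
    (hpart1 : ∀ (i : Fin n) (j : Fin n), C₁ i (Fin.castSucc j) = Cb₁ i j)
    (hlast1 : ∀ i : Fin n, C₁ i (Fin.last n) = b i)
    (hpart2 : ∀ (i : Fin n) (j : Fin n), C₂ i (Fin.castSucc j) = Cb₂ i j)
    (hlast2 : ∀ i : Fin n, C₂ i (Fin.last n) = g i)
    (hCb₁ : IsUnit Cb₁) (hCb₂ : IsUnit Cb₂)
    (hden : 1 + g ⬝ᵥ ((Cb₂⁻¹)ᵀ *ᵥ (Cb₁⁻¹ *ᵥ b)) ≠ 0)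
    (γ : ℝ) (hγ : γ = (1 + g ⬝ᵥ ((Cb₂⁻¹)ᵀ *ᵥ (Cb₁⁻¹ *ᵥ b)))⁻¹)
    (u v : Fin (n + 1) → ℝ)
    (hu : u = Fin.snoc (Cb₁⁻¹ *ᵥ b) (-1))
    (hv : v = Fin.snoc (g ᵥ* (Cb₂⁻¹)ᵀ) (-1)) :
    C₁ * C₂ᵀ = Cb₁ * Cb₂ᵀ + vecMulVec b g ∧
    IsUnit (C₁ * C₂ᵀ) ∧
    (1 : Matrix (Fin (n + 1)) (Fin (n + 1)) ℝ) - C₂ᵀ * (C₁ * C₂ᵀ)⁻¹ * C₁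
      = γ • vecMulVec u v ∧
    ((1 : Matrix (Fin (n + 1)) (Fin (n + 1)) ℝ) - C₂ᵀ * (C₁ * C₂ᵀ)⁻¹ * C₁).rank = 1 := by
  obtain rfl := eq_snocCol hpart1 hlast1
  obtain rfl := eq_snocCol hpart2 hlast2
  subst hγ hu hv
  have hdet₁ := (isUnit_iff_isUnit_det _).mp hCb₁
  have hdet₂ := (isUnit_iff_isUnit_det _).mp hCb₂
  have hprod := snocCol_mul_transpose_snocCol Cb₁ Cb₂ b g
  have hunit : IsUnit (snocCol Cb₁ b * (snocCol Cb₂ g)ᵀ) :=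
    hprod ▸ isUnit_mul_transpose_add_vecMulVec hdet₁ hdet₂ hden
  have hvu : Fin.snoc (g ᵥ* (Cb₂⁻¹)ᵀ) (-1) ⬝ᵥ Fin.snoc (Cb₁⁻¹ *ᵥ b) (-1)
      = 1 + g ⬝ᵥ ((Cb₂⁻¹)ᵀ *ᵥ (Cb₁⁻¹ *ᵥ b)) := by
    rw [snoc_dotProduct_snoc, ← dotProduct_mulVec]
    ring
  have hker₂ : snocCol Cb₂ g *ᵥ Fin.snoc (g ᵥ* (Cb₂⁻¹)ᵀ) (-1) = 0 := by
    rw [snocCol_mulVec_snoc, vecMul_transpose, mulVec_mulVec, mul_nonsing_inv _ hdet₂,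
      one_mulVec, neg_one_smul, add_neg_cancel]
  have hproj := one_sub_transpose_mul_inv_mul_eq_smul_vecMulVec _ _ hunit
    (fun _ => exists_eq_smul_of_snocCol_mulVec_eq_zero hCb₁ b) hker₂ (hvu ▸ hden)
  rw [hvu] at hproj
  refine ⟨hprod, hunit, hproj, ?_⟩
  rw [hproj, ← smul_vecMulVec]
  refine rank_vecMulVec_of_ne_zero (smul_ne_zero (inv_ne_zero hden) fun h => ?_) fun h => ?_
  · simpa using congr_fun h (Fin.last n)
  · simpa using congr_fun h (Fin.last n)
end

section
/- Let M be an N×N real matrix that is diagonalizable as M = Q Λ Q⁻¹, where Λ is diagonal with last diagonal entry 0 and all other diagonal entries belonging to a finite set {λ₁, …, λ_K} of nonzero reals. Then ∏_{k=1}^{K} (I − λₖ⁻¹ M) = v_N u_N, where v_N = Q e_N is the N-th column of Q (an eigenvector of M for the eigenvalue 0) and u_N = e_Nᵀ Q⁻¹ is the N-th row of Q⁻¹ (a left eigenvector of M for the eigenvalue 0). -/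
/-!
Conjugation by `Q` turns the factors into the diagonal matrices `diag (1 - λₖ⁻¹ Λⱼⱼ)`. In the
product, coordinate `j ≠ N` is killed by the factor with `λₖ = Λⱼⱼ`, while coordinate `N` stays
`1` since `Λ_NN = 0`; so the product is `Q e_N e_Nᵀ Q⁻¹`.
-/

open Matrix

theorem Units.list_prod_ofFn_conj {M : Type*} [Monoid M] (u : Mˣ) {K : ℕ} (f : Fin K → M) :
    (List.ofFn fun k => ↑u * f k * ↑u⁻¹).prod = ↑u * (List.ofFn f).prod * ↑u⁻¹ := by
  have := map_list_prod (MulDistribMulAction.toMonoidHom M (ConjAct.toConjAct u)) (List.ofFn f)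
  simpa only [MulDistribMulAction.toMonoidHom_apply, ConjAct.units_smul_def,
    ConjAct.ofConjAct_toConjAct, List.map_ofFn, Function.comp_def] using this.symm

namespace Matrix

variable {n R : Type*} [Fintype n] [DecidableEq n]

theorem list_prod_ofFn_diagonal [CommSemiring R] {K : ℕ} (d : Fin K → n → R) :
    (List.ofFn fun k => diagonal (d k)).prod =
      diagonal fun j => (List.ofFn fun k => d k j).prod := by
  rw [show (fun k => diagonal (d k)) = diagonalRingHom n R ∘ d from rfl, ← List.map_ofFn,
    ← map_list_prod, diagonalRingHom_apply]
  congr 1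
  funext j
  rw [Pi.list_prod_apply, List.map_ofFn]
  rfl

theorem mul_diagonal_single_one_mul [Semiring R] (A B : Matrix n n R) (i : n) :
    A * diagonal (Pi.single i 1) * B = vecMulVec (A.col i) (B.row i) := by
  rw [diagonal_single, single_eq_single_vecMulVec_single, mul_vecMulVec, vecMulVec_mul,
    mulVec_single_one, single_one_vecMul]

end Matrix

/-- for a diagonalizable M = QΛQ⁻¹ with Λ as in Statement 5,
∏_{k=1}^K (I − λₖ⁻¹ M) = v_N u_N, the outer product of the N-th column of Q
with the N-th row of Q⁻¹. -/
theorem stmt6 {n K : ℕ} (M Q Λ : Matrix (Fin (n + 1)) (Fin (n + 1)) ℝ)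
    (hQ : IsUnit Q) (hM : M = Q * Λ * Q⁻¹)
    (hdiag : Λ.IsDiag)
    (hlast : Λ (Fin.last n) (Fin.last n) = 0)
    (lam : Fin K → ℝ) (hne : ∀ k, lam k ≠ 0)
    (hmem : ∀ j : Fin (n + 1), j ≠ Fin.last n → ∃ k, Λ j j = lam k) :
    (List.ofFn
        (fun k : Fin K =>
          (1 : Matrix (Fin (n + 1)) (Fin (n + 1)) ℝ) - (lam k)⁻¹ • M)).prod
      = vecMulVec (fun i => Q i (Fin.last n)) (fun j => Q⁻¹ (Fin.last n) j) := by
  obtain ⟨d, rfl⟩ : ∃ d, Λ = diagonal d := ⟨_, hdiag.diagonal_diag.symm⟩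
  simp only [diagonal_apply_eq] at hlast hmem
  have hQQinv : Q * Q⁻¹ = 1 := mul_nonsing_inv Q ((isUnit_iff_isUnit_det Q).mp hQ)
  have hconj := hQ.unit.list_prod_ofFn_conj (K := K)
  simp only [coe_units_inv, hQ.unit_spec] at hconj
  have hfactor : ∀ c : ℝ, 1 - c • M = Q * diagonal (fun j => 1 - c * d j) * Q⁻¹ := by
    intro c
    rw [show diagonal (fun j => 1 - c * d j) = 1 - c • diagonal d by
        rw [← diagonal_one, ← diagonal_smul, ← diagonal_sub]; rfl,
      mul_sub, sub_mul, mul_one, hQQinv, mul_smul_comm, smul_mul_assoc, hM]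
  have hscalar :
      (fun j => (List.ofFn fun k => 1 - (lam k)⁻¹ * d j).prod) = Pi.single (Fin.last n) 1 := by
    funext j
    by_cases hj : j = Fin.last n
    · subst hj
      simp [hlast]
    · obtain ⟨k, hk⟩ := hmem j hj
      rw [Pi.single_eq_of_ne hj]
      exact List.prod_eq_zero
        (List.mem_ofFn.mpr ⟨k, by rw [hk, inv_mul_cancel₀ (hne k), sub_self]⟩)
  simp only [hfactor, hconj, list_prod_ofFn_diagonal, hscalar, mul_diagonal_single_one_mul]
  rfl
end

section
/- (Finite-time convergence of the generalized eigenstep method.) Let C₁, C₂ be (N−1)×N real matrices such that C₁ has full row rank and C₁C₂ᵀ is invertible, and suppose C₂ᵀC₁ = Q Λ Q⁻¹, where Λ is a real diagonal matrix with last diagonal entry 0 and all other diagonal entries belonging to a finite set {λ₁, …, λ_K} of nonzero reals. Let d ∈ ℝ^{N−1}, w₀ ∈ ℝᴺ, and define w° = w₀ + C₂ᵀ(C₁C₂ᵀ)⁻¹(d − C₁w₀). Run the recursion wᵢ = wᵢ₋₁ − (1/λᵢ) C₂ᵀC₁ wᵢ₋₁ + (1/λᵢ) C₂ᵀ d for i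 = 1, …, K. Then w_K = w°; i.e. the recursion reaches the exact constrained solution in K iterations. -/
open Matrix

/-- finite-time convergence of the generalized eigenstep method:
with step sizes 1/λᵢ, the recursion reaches the exact constrained solution
w° in K iterations. -/
theorem stmt7 {n K : ℕ} (C₁ C₂ : Matrix (Fin n) (Fin (n + 1)) ℝ)
    (hfull : IsUnit (C₁ * C₁ᵀ)) (hinv : IsUnit (C₁ * C₂ᵀ))
    (Q Λ : Matrix (Fin (n + 1)) (Fin (n + 1)) ℝ) (hQ : IsUnit Q)
    (hdecomp : C₂ᵀ * C₁ = Q * Λ * Q⁻¹)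
    (hdiag : Λ.IsDiag)
    (hlast : Λ (Fin.last n) (Fin.last n) = 0)
    (lam : Fin K → ℝ) (hne : ∀ k, lam k ≠ 0)
    (hmem : ∀ j : Fin (n + 1), j ≠ Fin.last n → ∃ k, Λ j j = lam k)
    (d : Fin n → ℝ) (w₀ wo : Fin (n + 1) → ℝ)
    (hwo : wo = w₀ + (C₂ᵀ * (C₁ * C₂ᵀ)⁻¹) *ᵥ (d - C₁ *ᵥ w₀))
    (w : ℕ → Fin (n + 1) → ℝ) (hw0 : w 0 = w₀)
    (hrec : ∀ i : Fin K,
      w (i.val + 1) =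
        w i.val - (lam i)⁻¹ • ((C₂ᵀ * C₁) *ᵥ w i.val) + (lam i)⁻¹ • (C₂ᵀ *ᵥ d)) :
    w K = wo := by
  have hQdet : IsUnit Q.det := (Matrix.isUnit_iff_isUnit_det Q).mp hQ
  have hQl : Q⁻¹ * Q = 1 := Matrix.nonsing_inv_mul Q hQdet
  have hQr : Q * Q⁻¹ = 1 := Matrix.mul_nonsing_inv Q hQdet
  have hfdet : IsUnit (C₁ * C₁ᵀ).det := (Matrix.isUnit_iff_isUnit_det _).mp hfull
  have hidet : IsUnit (C₁ * C₂ᵀ).det := (Matrix.isUnit_iff_isUnit_det _).mp hinv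
  have hfr : (C₁ * C₁ᵀ) * (C₁ * C₁ᵀ)⁻¹ = 1 := Matrix.mul_nonsing_inv _ hfdet
  have hir : (C₁ * C₂ᵀ) * (C₁ * C₂ᵀ)⁻¹ = 1 := Matrix.mul_nonsing_inv _ hidet
  -- C₁ wo = d
  have hC1wo : C₁ *ᵥ wo = d := by
    rw [hwo, Matrix.mulVec_add, Matrix.mulVec_mulVec, ← Matrix.mul_assoc, hir]
    simp [Matrix.mulVec_sub]
  -- z with C₁ z = (C₁C₂ᵀ)⁻¹ (d - C₁ w₀)
  set z : Fin (n+1) → ℝ :=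
    C₁ᵀ *ᵥ ((C₁ * C₁ᵀ)⁻¹ *ᵥ ((C₁ * C₂ᵀ)⁻¹ *ᵥ (d - C₁ *ᵥ w₀))) with hzdef
  have hz : C₁ *ᵥ z = (C₁ * C₂ᵀ)⁻¹ *ᵥ (d - C₁ *ᵥ w₀) := by
    rw [hzdef, Matrix.mulVec_mulVec, Matrix.mulVec_mulVec, hfr]
    simp
  have hwo2 : wo - w₀ = (C₂ᵀ * C₁) *ᵥ z := by
    rw [hwo]
    have : (C₂ᵀ * C₁) *ᵥ z = C₂ᵀ *ᵥ (C₁ *ᵥ z) := (Matrix.mulVec_mulVec _ _ _).symm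
    rw [this, hz, ← Matrix.mulVec_mulVec]
    abel
  -- diagonal action
  have hΛv : ∀ (v : Fin (n+1) → ℝ) (j : Fin (n+1)), (Λ *ᵥ v) j = Λ j j * v j := by
    intro v j
    simp only [Matrix.mulVec, dotProduct]
    rw [Finset.sum_eq_single j]
    · intro b _ hb
      rw [hdiag (Ne.symm hb), zero_mul]
    · intro h; exact absurd (Finset.mem_univ j) h
  -- u
  set u : ℕ → Fin (n+1) → ℝ := fun i => Q⁻¹ *ᵥ (w i - wo) with hudef
  have hu0 : ∀ j, u 0 j = -(Λ j j * ((Q⁻¹ *ᵥ z) j)) := by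
    intro j
    have h1 : w 0 - wo = -((C₂ᵀ * C₁) *ᵥ z) := by rw [hw0, ← hwo2]; abel
    have : u 0 = -(Λ *ᵥ (Q⁻¹ *ᵥ z)) := by
      rw [hudef]
      simp only [h1, Matrix.mulVec_neg, hdecomp, Matrix.mulVec_mulVec]
      rw [show Q⁻¹ * (Q * Λ * Q⁻¹) = (Q⁻¹ * Q) * Λ * Q⁻¹ by
          simp [Matrix.mul_assoc],
        hQl, Matrix.one_mul]
    rw [this]
    simp only [Pi.neg_apply, ← Matrix.mulVec_mulVec, hΛv]
  have hurec : ∀ i : Fin K, ∀ j,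
      u (i.val + 1) j = u i.val j - (lam i)⁻¹ * (Λ j j * u i.val j) := by
    intro i j
    have hA : (C₂ᵀ * C₁) *ᵥ wo = C₂ᵀ *ᵥ d := by
      rw [← Matrix.mulVec_mulVec, hC1wo]
    have h1 : w (i.val + 1) - wo =
        (w i.val - wo) - (lam i)⁻¹ • ((C₂ᵀ * C₁) *ᵥ (w i.val - wo)) := by
      rw [hrec i, Matrix.mulVec_sub, hA, smul_sub]
      abel
    have h2 : u (i.val + 1) = u i.val - (lam i)⁻¹ • (Λ *ᵥ u i.val) := by
      rw [hudef]
      simp only [h1, Matrix.mulVec_sub, Matrix.mulVec_smul, hdecomp,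
        Matrix.mulVec_mulVec]
      rw [show Q⁻¹ * (Q * Λ * Q⁻¹) = (Q⁻¹ * Q) * Λ * Q⁻¹ by
          simp [Matrix.mul_assoc],
        hQl, Matrix.one_mul]
    rw [h2]
    simp only [Pi.sub_apply, Pi.smul_apply, ← Matrix.mulVec_mulVec, hΛv, smul_eq_mul]
  -- last coordinate stays 0
  have hlastzero : ∀ i, i ≤ K → u i (Fin.last n) = 0 := by
    intro i
    induction i with
    | zero => intro _; rw [hu0, hlast]; ring
    | succ m ih =>
      intro hm
      have hmK : m < K := lt_of_lt_of_le (Nat.lt_succ_self m) hm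
      rw [hurec ⟨m, hmK⟩ (Fin.last n), ih (le_of_lt hmK), hlast]
      ring
  -- other coordinates die
  have hkill : ∀ (j : Fin (n+1)) (k : Fin K), Λ j j = lam k →
      ∀ i, k.val < i → i ≤ K → u i j = 0 := by
    intro j k hΛ i
    induction i with
    | zero => intro h; exact absurd h (Nat.not_lt_zero _)
    | succ m ih =>
      intro hkm hmK
      have hmK' : m < K := lt_of_lt_of_le (Nat.lt_succ_self m) hmK
      rcases Nat.lt_or_ge k.val m with h | h
      · rw [hurec ⟨m, hmK'⟩ j, ih h (le_of_lt hmK')]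
        ring
      · have hkm' : k.val = m := le_antisymm (Nat.lt_succ_iff.mp hkm) h
        have hk : (⟨m, hmK'⟩ : Fin K) = k := by
          apply Fin.ext; simp [hkm']
        rw [hurec ⟨m, hmK'⟩ j, hk, hΛ,
          inv_mul_cancel_left₀ (hne k)]
        ring
  have huK : u K = 0 := by
    funext j
    by_cases hj : j = Fin.last n
    · rw [hj]; exact hlastzero K le_rfl
    · obtain ⟨k, hk⟩ := hmem j hj
      exact hkill j k hk K k.isLt le_rfl
  have : w K - wo = 0 := by
    have h1 : Q *ᵥ u K = w K - wo := by
      rw [hudef]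
      simp only [Matrix.mulVec_mulVec, hQr, Matrix.one_mulVec]
    rw [← h1, huK, Matrix.mulVec_zero]
  have := sub_eq_zero.mp this
  exact this
end

section
/- Let A₀ be an N×N real matrix that is diagonalizable as A₀ = Q Λ Q⁻¹, where Λ is diagonal, its first N−1 diagonal entries belong to a finite set {λ₁, …, λ_K} of nonzero reals, and its last diagonal entry λ_N satisfies λ_N ∉ {λ₁, …, λ_K}. Define the normalized step matrices Aᵢ = (λᵢ − λ_N)⁻¹ (λᵢ I − A₀) for i = 1, …, K. Then ∏_{i=1}^{K} Aᵢ = v_N u_N, where v_N = Q e_N and u_N = e_Nᵀ Q⁻¹; consequently, for every w₀ ∈ ℝᴺ the recursion wᵢ = Aᵢ wᵢ₋₁ satisfies w_K = (u_N w₀) v_N exactly (no residual scaling factor). -/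
open Matrix

lemma conj_list_prod {m : Type*} [Fintype m] [DecidableEq m]
    (Q : Matrix m m ℝ) (hd : IsUnit Q.det) (l : List (Matrix m m ℝ)) :
    (l.map (fun X => Q * X * Q⁻¹)).prod = Q * l.prod * Q⁻¹ := by
  induction l with
  | nil => simp [Matrix.mul_nonsing_inv Q hd]
  | cons a t ih =>
    simp only [List.map_cons, List.prod_cons, ih]
    have h := Matrix.nonsing_inv_mul Q hd
    calc (Q * a * Q⁻¹) * (Q * t.prod * Q⁻¹)
        = Q * a * (Q⁻¹ * Q) * t.prod * Q⁻¹ := by noncomm_ring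
      _ = Q * (a * t.prod) * Q⁻¹ := by rw [h]; noncomm_ring

/-- with the normalized step matrices
Aᵢ = (λᵢ − λ_N)⁻¹(λᵢI − A₀), the product ∏ᵢ Aᵢ equals v_N u_N, and the
recursion wᵢ = Aᵢwᵢ₋₁ satisfies w_K = (u_N w₀)·v_N exactly. -/
theorem stmt11 {n K : ℕ} (A₀ Q Λ : Matrix (Fin (n + 1)) (Fin (n + 1)) ℝ)
    (hQ : IsUnit Q) (hA : A₀ = Q * Λ * Q⁻¹)
    (hdiag : Λ.IsDiag)
    (lam : Fin K → ℝ) (hne : ∀ k, lam k ≠ 0)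
    (hmem : ∀ j : Fin (n + 1), j ≠ Fin.last n → ∃ k, Λ j j = lam k)
    (hNnotin : ∀ k, Λ (Fin.last n) (Fin.last n) ≠ lam k)
    (vN uN : Fin (n + 1) → ℝ)
    (hv : vN = fun i => Q i (Fin.last n))
    (hu : uN = fun j => Q⁻¹ (Fin.last n) j)
    (A : Fin K → Matrix (Fin (n + 1)) (Fin (n + 1)) ℝ)
    (hAi : ∀ i : Fin K,
      A i = (lam i - Λ (Fin.last n) (Fin.last n))⁻¹ •
        (lam i • (1 : Matrix (Fin (n + 1)) (Fin (n + 1)) ℝ) - A₀)) :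
    (List.ofFn A).prod = vecMulVec vN uN ∧
    ∀ (w₀ : Fin (n + 1) → ℝ) (w : ℕ → Fin (n + 1) → ℝ), w 0 = w₀ →
      (∀ i : Fin K, w (i.val + 1) = A i *ᵥ w i.val) →
      w K = (uN ⬝ᵥ w₀) • vN := by
  have hdet : IsUnit Q.det := (Matrix.isUnit_iff_isUnit_det Q).mp hQ
  have hQQi : Q * Q⁻¹ = 1 := Matrix.mul_nonsing_inv Q hdet
  have hQiQ : Q⁻¹ * Q = 1 := Matrix.nonsing_inv_mul Q hdet
  set lN := Λ (Fin.last n) (Fin.last n) with hlN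
  set d : Fin K → Fin (n + 1) → ℝ :=
    fun i j => (lam i - lN)⁻¹ * (lam i - Λ j j) with hdd
  have hΛ : Λ = Matrix.diagonal (fun j => Λ j j) := by
    ext i j
    by_cases h : i = j
    · subst h; simp
    · simp [Matrix.diagonal_apply_ne _ h, hdiag h]
  have hAdi : ∀ i, A i = Q * Matrix.diagonal (d i) * Q⁻¹ := by
    intro i
    rw [hAi, hA]
    have h1 : Q * (lam i • (1 : Matrix (Fin (n+1)) (Fin (n+1)) ℝ)) * Q⁻¹
        = lam i • (1 : Matrix (Fin (n+1)) (Fin (n+1)) ℝ) := by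
      rw [Matrix.mul_smul, mul_one, Matrix.smul_mul, hQQi]
    have hY : Q * (lam i • (1 : Matrix (Fin (n+1)) (Fin (n+1)) ℝ) - Λ) * Q⁻¹
        = lam i • (1 : Matrix (Fin (n+1)) (Fin (n+1)) ℝ) - Q * Λ * Q⁻¹ := by
      rw [Matrix.mul_sub, Matrix.sub_mul, h1]
    rw [← hY]
    have hD : Matrix.diagonal (d i)
        = (lam i - lN)⁻¹ • (lam i • (1 : Matrix (Fin (n+1)) (Fin (n+1)) ℝ) - Λ) := by
      ext a b
      by_cases h : a = b
      · subst h
        simp [hdd, Matrix.diagonal]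
      · simp only [Matrix.diagonal_apply_ne _ h, Pi.smul_apply, Matrix.sub_apply,
          Matrix.smul_apply, Matrix.one_apply_ne h, smul_eq_mul, hdiag h]
        ring
    rw [hD, Matrix.mul_smul, Matrix.smul_mul]
  have hlist : List.ofFn A = (List.ofFn d).map (fun v => Q * Matrix.diagonal v * Q⁻¹) := by
    rw [List.map_ofFn]
    congr 1
    funext i
    simp [Function.comp, hAdi i]
  have hdiagprod : ∀ (l : List (Fin (n+1) → ℝ)),
      (l.map (fun v => Matrix.diagonal v)).prod = Matrix.diagonal l.prod := by
    intro l
    induction l with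
    | nil => exact Matrix.diagonal_one.symm
    | cons a t ih => simp [ih, Matrix.diagonal_mul_diagonal]
  have hofn : (List.ofFn d).prod = fun j => ∏ i, d i j := by
    rw [List.prod_ofFn]
    funext j
    simp [Finset.prod_apply]
  have hprodA : (List.ofFn A).prod = Q * Matrix.diagonal (fun j => ∏ i, d i j) * Q⁻¹ := by
    rw [hlist,
      show (fun v : Fin (n+1) → ℝ => Q * Matrix.diagonal v * Q⁻¹)
        = (fun X => Q * X * Q⁻¹) ∘ (fun v => Matrix.diagonal v) from rfl,
      ← List.map_map, conj_list_prod Q hdet, hdiagprod, hofn]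
  -- compute diagonal entries
  have hdlast : ∀ i, d i (Fin.last n) = 1 := by
    intro i
    have : lam i - lN ≠ 0 := sub_ne_zero.mpr (fun h => hNnotin i h.symm)
    simp only [hdd]
    exact inv_mul_cancel₀ this
  have he : (fun j => ∏ i, d i j)
      = fun j => if j = Fin.last n then (1:ℝ) else 0 := by
    funext j
    by_cases h : j = Fin.last n
    · subst h
      simp [hdlast]
    · obtain ⟨k, hk⟩ := hmem j h
      rw [if_neg h]
      refine Finset.prod_eq_zero (Finset.mem_univ k) ?_
      simp [hdd, hk]
  have hvec : Q * Matrix.diagonal (fun j => if j = Fin.last n then (1:ℝ) else 0) * Q⁻¹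
      = vecMulVec vN uN := by
    ext i j
    rw [Matrix.mul_apply]
    rw [Finset.sum_eq_single (Fin.last n)]
    · simp [Matrix.mul_diagonal, vecMulVec_apply, hv, hu]
    · intro b _ hb
      simp [Matrix.mul_diagonal, hb]
    · simp
  have hprod : (List.ofFn A).prod = vecMulVec vN uN := by
    rw [hprodA, he, hvec]
  refine ⟨hprod, ?_⟩
  intro w₀ w hw0 hwrec
  have key : ∀ m (hm : m ≤ K),
      w m = (Q * Matrix.diagonal (fun j => ∏ i : Fin m, d (Fin.castLE hm i) j) * Q⁻¹) *ᵥ w₀ := by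
    intro m
    induction m with
    | zero =>
      intro hm
      have h0 : Matrix.diagonal (fun j => ∏ i : Fin 0, d (Fin.castLE hm i) j)
          = (1 : Matrix (Fin (n+1)) (Fin (n+1)) ℝ) := by
        rw [← Matrix.diagonal_one]
        exact congrArg Matrix.diagonal (funext fun j => by simp)
      rw [h0, mul_one, hQQi, Matrix.one_mulVec, hw0]
    | succ m ih =>
      intro hm
      have hm' : m ≤ K := Nat.le_of_succ_le hm
      have hmK : m < K := hm
      have hstep := hwrec ⟨m, hmK⟩
      have hfun : (fun j => d ⟨m, hmK⟩ j * ∏ i : Fin m, d (Fin.castLE hm' i) j)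
          = (fun j => ∏ i : Fin (m+1), d (Fin.castLE hm i) j) := by
        funext j
        rw [Fin.prod_univ_castSucc]
        have h1 : ∀ i : Fin m, Fin.castLE hm i.castSucc = Fin.castLE hm' i :=
          fun i => Fin.ext (by simp)
        have h2 : Fin.castLE hm (Fin.last m) = (⟨m, hmK⟩ : Fin K) := Fin.ext (by simp)
        simp only [h1, h2]
        exact mul_comm _ _
      have hmat : Q * Matrix.diagonal (d ⟨m, hmK⟩) * Q⁻¹ *
            (Q * Matrix.diagonal (fun j => ∏ i : Fin m, d (Fin.castLE hm' i) j) * Q⁻¹)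
          = Q * Matrix.diagonal (fun j => ∏ i : Fin (m+1), d (Fin.castLE hm i) j) * Q⁻¹ := by
        calc Q * Matrix.diagonal (d ⟨m, hmK⟩) * Q⁻¹ *
            (Q * Matrix.diagonal (fun j => ∏ i : Fin m, d (Fin.castLE hm' i) j) * Q⁻¹)
            = Q * Matrix.diagonal (d ⟨m, hmK⟩) * (Q⁻¹ * Q) *
              Matrix.diagonal (fun j => ∏ i : Fin m, d (Fin.castLE hm' i) j) * Q⁻¹ := by
              noncomm_ring
          _ = Q * (Matrix.diagonal (d ⟨m, hmK⟩) *
              Matrix.diagonal (fun j => ∏ i : Fin m, d (Fin.castLE hm' i) j)) * Q⁻¹ := by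
              rw [hQiQ]; noncomm_ring
          _ = Q * Matrix.diagonal (fun j => ∏ i : Fin (m+1), d (Fin.castLE hm i) j) * Q⁻¹ := by
              rw [Matrix.diagonal_mul_diagonal]
              rw [show (fun j => d ⟨m, hmK⟩ j * ∏ i : Fin m, d (Fin.castLE hm' i) j) =
                (fun j => ∏ i : Fin (m+1), d (Fin.castLE hm i) j) from hfun]
      rw [hstep, ih hm', hAdi ⟨m, hmK⟩, Matrix.mulVec_mulVec, hmat]
  have hK := key K le_rfl
  have hcast : (fun j => ∏ i : Fin K, d (Fin.castLE le_rfl i) j)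
      = fun j => ∏ i, d i j := by
    funext j
    exact Finset.prod_congr rfl (fun i _ => rfl)
  rw [hK, hcast, he, hvec]
  ext i
  simp only [Matrix.mulVec, vecMulVec_apply, dotProduct, Pi.smul_apply, smul_eq_mul]
  rw [Finset.sum_mul]
  exact Finset.sum_congr rfl (fun x _ => by ring)
end

section
/- Let L be an N×(N−1) real matrix with LᵀL invertible, partitioned as L = [L̄; b], where L̄ is the top (N−1)×(N−1) block, assumed invertible, and b ∈ ℝ^{N−1} is the bottom row. Set γ = (1 + b L̄⁻¹ L̄⁻ᵀ bᵀ)⁻¹ (which is well defined since 1 + b L̄⁻¹ L̄⁻ᵀ bᵀ ≥ 1). Then I − L(LᵀL)⁻¹Lᵀ = γ · u uᵀ, where u ∈ ℝᴺ is the column vector whose first N−1 entries are L̄⁻ᵀ bᵀ and whose last entry is −1. Consequently, for every w₀ ∈ ℝᴺ, the solution w° = [I − L(LᵀL)⁻¹Lᵀ] w₀ satisfies w°(1:N−1) = γ · L̄⁻ᵀ bᵀ · (b L̄⁻¹ w₀(1:N−1) − w₀(N)) and w°(N) = −γ · (b L̄⁻¹ w₀(1:N−1) − w₀(N)). -/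
open Matrix

/-- rank-one form of I − L(LᵀL)⁻¹Lᵀ for a partitioned
L = [L̄; b] with L̄ invertible, together with the resulting explicit
expression for the solution w° = (I − L(LᵀL)⁻¹Lᵀ)w₀. -/
theorem stmt14 {n : ℕ} (L : Matrix (Fin (n + 1)) (Fin n) ℝ)
    (hL : IsUnit (Lᵀ * L))
    (Lb : Matrix (Fin n) (Fin n) ℝ) (b : Fin n → ℝ)
    (hpart : ∀ (i : Fin n) (j : Fin n), L (Fin.castSucc i) j = Lb i j)
    (hbot : ∀ j : Fin n, L (Fin.last n) j = b j)
    (hLb : IsUnit Lb)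
    (γ : ℝ) (hγ : γ = (1 + (b ᵥ* Lb⁻¹) ⬝ᵥ ((Lb⁻¹)ᵀ *ᵥ b))⁻¹)
    (u : Fin (n + 1) → ℝ) (hu : u = Fin.snoc ((Lb⁻¹)ᵀ *ᵥ b) (-1)) :
    (1 + (b ᵥ* Lb⁻¹) ⬝ᵥ ((Lb⁻¹)ᵀ *ᵥ b) ≥ 1) ∧
    (1 : Matrix (Fin (n + 1)) (Fin (n + 1)) ℝ) - L * (Lᵀ * L)⁻¹ * Lᵀ
      = γ • vecMulVec u u ∧
    ∀ w₀ : Fin (n + 1) → ℝ,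
      (∀ i : Fin n,
        ((((1 : Matrix (Fin (n + 1)) (Fin (n + 1)) ℝ) - L * (Lᵀ * L)⁻¹ * Lᵀ) *ᵥ w₀)
            (Fin.castSucc i))
          = γ * (((Lb⁻¹)ᵀ *ᵥ b) i) *
              ((b ᵥ* Lb⁻¹) ⬝ᵥ (fun j => w₀ (Fin.castSucc j)) - w₀ (Fin.last n))) ∧
      ((((1 : Matrix (Fin (n + 1)) (Fin (n + 1)) ℝ) - L * (Lᵀ * L)⁻¹ * Lᵀ) *ᵥ w₀)
          (Fin.last n))
        = -(γ * ((b ᵥ* Lb⁻¹) ⬝ᵥ (fun j => w₀ (Fin.castSucc j)) - w₀ (Fin.last n))) := by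
  set v : Fin n → ℝ := (Lb⁻¹)ᵀ *ᵥ b with hv
  have hbv : b ᵥ* Lb⁻¹ = v := by
    rw [hv, ← transpose_transpose (Lb⁻¹), vecMul_transpose, transpose_transpose]
  have hvv : 0 ≤ v ⬝ᵥ v := Finset.sum_nonneg fun i _ => mul_self_nonneg _
  have hLdet : IsUnit (Lᵀ * L).det := (isUnit_iff_isUnit_det _).mp hL
  have hLbdet : IsUnit Lb.det := (isUnit_iff_isUnit_det _).mp hLb
  -- Lᵀ u = 0
  have hsum : ∀ j, ∑ i, u i * L i j = 0 := by
    intro j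
    rw [Fin.sum_univ_castSucc]
    have h1 : ∀ i : Fin n, u (Fin.castSucc i) = v i := by
      intro i; rw [hu]; exact Fin.snoc_castSucc _ _ _
    have h2 : u (Fin.last n) = -1 := by rw [hu]; exact Fin.snoc_last _ _
    simp only [h1, h2, hpart, hbot]
    have : ∑ i, v i * Lb i j = (Lbᵀ *ᵥ v) j := by
      simp [mulVec, dotProduct, transpose_apply, mul_comm]
    rw [this, hv, mulVec_mulVec, ← transpose_mul, nonsing_inv_mul Lb hLbdet]
    simp
  have hLtu : Lᵀ *ᵥ u = 0 := by
    funext j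
    simpa [mulVec, dotProduct, transpose_apply, mul_comm] using hsum j
  -- u ⬝ u
  have huu : u ⬝ᵥ u = 1 + v ⬝ᵥ v := by
    rw [hu]
    simp [dotProduct, Fin.sum_univ_castSucc]
    ring
  have hγ1 : γ * (1 + v ⬝ᵥ v) = 1 := by
    rw [hγ, hbv]
    exact inv_mul_cancel₀ (by linarith)
  -- the bordered matrix
  set M : Matrix (Fin (n + 1)) (Fin (n + 1)) ℝ :=
    Matrix.of (fun i => Fin.snoc (L i) (u i)) with hM
  have hMx : ∀ x : Fin (n + 1) → ℝ,
      M *ᵥ x = L *ᵥ (fun j => x (Fin.castSucc j)) + x (Fin.last n) • u := by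
    intro x
    funext i
    simp [hM, mulVec, dotProduct, Fin.sum_univ_castSucc, mul_comm]
  have hker : ∀ x : Fin (n + 1) → ℝ, M *ᵥ x = 0 → x = 0 := by
    intro x hx
    rw [hMx] at hx
    have h1 : (Lᵀ * L) *ᵥ (fun j => x (Fin.castSucc j)) = 0 := by
      have := congrArg (fun y => Lᵀ *ᵥ y) hx
      simpa [mulVec_add, mulVec_smul, hLtu, mulVec_mulVec] using this
    have h2 : (fun j => x (Fin.castSucc j)) = 0 := by
      have := congrArg (fun y => (Lᵀ * L)⁻¹ *ᵥ y) h1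
      simpa [mulVec_mulVec, nonsing_inv_mul _ hLdet, one_mulVec] using this
    rw [h2] at hx
    simp only [mulVec_zero, zero_add] at hx
    have h3 : x (Fin.last n) * u (Fin.last n) = 0 := by
      have := congrFun hx (Fin.last n); simpa using this
    have h4 : u (Fin.last n) = -1 := by rw [hu]; exact Fin.snoc_last _ _
    have h5 : x (Fin.last n) = 0 := by
      rw [h4] at h3; linarith
    funext j
    refine Fin.lastCases ?_ ?_ j
    · exact h5
    · intro i; exact congrFun h2 i
  have hMinj : Function.Injective M.mulVec := by
    intro x y hxy
    have := hker (x - y) (by rw [mulVec_sub, hxy, sub_self])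
    exact sub_eq_zero.mp this
  have hMu : IsUnit M := mulVec_injective_iff_isUnit.mp hMinj
  have hMdet : IsUnit M.det := (isUnit_iff_isUnit_det _).mp hMu
  set A : Matrix (Fin (n + 1)) (Fin (n + 1)) ℝ :=
    (1 : Matrix (Fin (n + 1)) (Fin (n + 1)) ℝ) - L * (Lᵀ * L)⁻¹ * Lᵀ with hA
  set B : Matrix (Fin (n + 1)) (Fin (n + 1)) ℝ := γ • vecMulVec u u with hB
  have hAL : A * L = 0 := by
    have h1 : L * (Lᵀ * L)⁻¹ * Lᵀ * L = L := by
      rw [Matrix.mul_assoc (L * (Lᵀ * L)⁻¹), Matrix.mul_assoc L,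
        nonsing_inv_mul _ hLdet, Matrix.mul_one]
    rw [hA, Matrix.sub_mul, Matrix.one_mul, h1, sub_self]
  have hBL : B * L = 0 := by
    funext i j
    simp only [hB, Matrix.smul_apply, Matrix.mul_apply, vecMulVec_apply,
      Matrix.zero_apply, smul_eq_mul]
    rw [show (∑ k, γ * (u i * u k) * L k j) = γ * u i * ∑ k, u k * L k j by
      rw [Finset.mul_sum]; exact Finset.sum_congr rfl fun k _ => by ring]
    rw [hsum j]; ring
  have hAu : A *ᵥ u = u := by
    rw [hA, sub_mulVec, one_mulVec, ← mulVec_mulVec, hLtu, mulVec_zero, sub_zero]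
  have hBu : B *ᵥ u = u := by
    funext i
    simp only [hB, smul_mulVec, Pi.smul_apply, smul_eq_mul]
    have : (vecMulVec u u *ᵥ u) i = u i * (u ⬝ᵥ u) := by
      simp [mulVec, vecMulVec_apply, dotProduct, Finset.mul_sum, mul_assoc]
    rw [this, huu]
    calc γ * (u i * (1 + v ⬝ᵥ v)) = (γ * (1 + v ⬝ᵥ v)) * u i := by ring
      _ = u i := by rw [hγ1]; ring
  have hABM : A * M = B * M := by
    funext i j
    refine Fin.lastCases ?_ ?_ j
    · have ha : (A * M) i (Fin.last n) = (A *ᵥ u) i := by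
        simp [Matrix.mul_apply, mulVec, dotProduct, hM]
      have hb : (B * M) i (Fin.last n) = (B *ᵥ u) i := by
        simp [Matrix.mul_apply, mulVec, dotProduct, hM]
      rw [ha, hb, hAu, hBu]
    · intro j'
      have ha : (A * M) i (Fin.castSucc j') = (A * L) i j' := by
        simp [Matrix.mul_apply, hM]
      have hb : (B * M) i (Fin.castSucc j') = (B * L) i j' := by
        simp [Matrix.mul_apply, hM]
      rw [ha, hb, hAL, hBL]
  have hAB : A = B := by
    calc A = A * (M * M⁻¹) := by rw [mul_nonsing_inv _ hMdet, mul_one]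
      _ = (A * M) * M⁻¹ := by rw [mul_assoc]
      _ = (B * M) * M⁻¹ := by rw [hABM]
      _ = B * (M * M⁻¹) := by rw [mul_assoc]
      _ = B := by rw [mul_nonsing_inv _ hMdet, mul_one]
  refine ⟨by rw [hbv]; linarith, hAB, ?_⟩
  intro w₀
  rw [hbv]
  have hudot : ∀ w₀ : Fin (n+1) → ℝ,
      u ⬝ᵥ w₀ = v ⬝ᵥ (fun j => w₀ (Fin.castSucc j)) - w₀ (Fin.last n) := by
    intro w₀
    rw [hu]
    simp [dotProduct, Fin.sum_univ_castSucc]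
    ring
  have hBw : ∀ (i : Fin (n+1)), (A *ᵥ w₀) i = γ * (u i * (u ⬝ᵥ w₀)) := by
    intro i
    rw [hAB, hB]
    simp only [smul_mulVec, Pi.smul_apply, smul_eq_mul]
    congr 1
    simp [mulVec, vecMulVec_apply, dotProduct, Finset.mul_sum, mul_assoc]
  constructor
  · intro i
    rw [show (((1 : Matrix (Fin (n + 1)) (Fin (n + 1)) ℝ) - L * (Lᵀ * L)⁻¹ * Lᵀ) *ᵥ w₀)
        (Fin.castSucc i) = (A *ᵥ w₀) (Fin.castSucc i) from rfl]
    rw [hBw, hudot]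
    have : u (Fin.castSucc i) = v i := by rw [hu]; exact Fin.snoc_castSucc _ _ _
    rw [this]; ring
  · rw [show (((1 : Matrix (Fin (n + 1)) (Fin (n + 1)) ℝ) - L * (Lᵀ * L)⁻¹ * Lᵀ) *ᵥ w₀)
        (Fin.last n) = (A *ᵥ w₀) (Fin.last n) from rfl]
    rw [hBw, hudot]
    have : u (Fin.last n) = -1 := by rw [hu]; exact Fin.snoc_last _ _
    rw [this]; ring
end
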